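/- arXiv:1301.7037 — 2 statements merged into one kernel-verified Lean document; each statement's English description precedes it below -/
import Mathlib

section
/- Let P be an invertible (model for normally hyperbolic) linear operator on a finite-dimensional graded vector space with retarded and advanced inverses Δ^R, Δ^A satisfying P∘Δ^{R/A} = id and Δ^{R/A}∘P = id, and let K be an odd operator satisfying (-1)^{|β|} P_{βγ} K^γ_σ + (K†)_β^γ P_{γσ} = 0. Then the propagators satisfy the consistency condition (-1)^{|α|} K^α_σ (Δ^*)^{σγ} + K^γ_σ (Δ^*)^{ασ} = 0 for Δ^* ∈ {Δ^R, Δ^A, Δ = Δ^R − Δ^A}. (In the finite-dimensional model Δ^R = Δ^A = P^{-1}, and the statement is (-1)^{|α|} K^α_σ (P^{-1})^{σγ} + K^γ_σ (P^{-1})^{ασ} = 0.) -/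
/-!
With `S = diag((-1)^{|α|})`, evenness of `P` means that `S` commutes with `P`, and oddness of `K`
makes its graded transpose the plain transpose, so the compatibility condition reads
`P (S K) + Kᵀ P = 0`. Conjugating by `Δ = P⁻¹` gives `(S K) Δ + Δ Kᵀ = 0`, which is the
consistency condition entrywise.
-/

noncomputable def sg (s : ZMod 2) : ℂ := if s = 0 then 1 else -1

theorem ZMod.mul_eq_zero_of_add_eq_one {a b : ZMod 2} (h : a + b = 1) : a * b = 0 := by
  revert a b; decide

theorem mul_add_mul_eq_zero_of_inverse {R : Type*} [Ring R] {p d x y : R}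
    (hpd : p * d = 1) (hdp : d * p = 1) (h : p * x + y * p = 0) : x * d + d * y = 0 :=
  calc x * d + d * y = (d * p) * x * d + d * y * (p * d) := by rw [hdp, hpd, one_mul, mul_one]
    _ = d * (p * x + y * p) * d := by noncomm_ring
    _ = 0 := by rw [h, mul_zero, zero_mul]

section GradedMatrix

open scoped Matrix

variable {ι : Type*} (p : ι → ZMod 2)

/-- The matrix of `(K†)_β^γ` in the compatibility condition. -/
noncomputable def gradedTranspose (K : Matrix ι ι ℂ) : Matrix ι ι ℂ :=
  Matrix.of fun β γ => sg (p β * p γ) * K γ β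

theorem gradedTranspose_eq_transpose_of_odd {K : Matrix ι ι ℂ}
    (hK : ∀ α β, K α β ≠ 0 → p α + p β = 1) : gradedTranspose p K = Kᵀ := by
  ext β γ
  by_cases h : K γ β = 0
  · simp [gradedTranspose, h]
  · have hodd : p β + p γ = 1 := (add_comm _ _).trans (hK γ β h)
    rw [gradedTranspose, Matrix.of_apply, ZMod.mul_eq_zero_of_add_eq_one hodd, sg, if_pos rfl,
      one_mul, Matrix.transpose_apply]

variable [DecidableEq ι]

noncomputable def signMatrix : Matrix ι ι ℂ := Matrix.diagonal fun i => sg (p i)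

variable [Fintype ι]

theorem signMatrix_mul_apply (M : Matrix ι ι ℂ) (i j : ι) :
    (signMatrix p * M) i j = sg (p i) * M i j :=
  Matrix.diagonal_mul _ _ _ _

theorem mul_signMatrix_apply (M : Matrix ι ι ℂ) (i j : ι) :
    (M * signMatrix p) i j = M i j * sg (p j) :=
  Matrix.mul_diagonal _ _ _ _

theorem signMatrix_commute_of_even {P : Matrix ι ι ℂ}
    (hP : ∀ α β, P α β ≠ 0 → p α + p β = 0) : Commute (signMatrix p) P := by
  ext i j
  rw [signMatrix_mul_apply, mul_signMatrix_apply]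
  by_cases h : P i j = 0
  · simp [h]
  · rw [CharTwo.add_eq_zero.mp (hP i j h), mul_comm]

end GradedMatrix

theorem propagator_consistency_general
    {ι : Type*} [Fintype ι] [DecidableEq ι] (p : ι → ZMod 2) (P K Δ : Matrix ι ι ℂ)
    (hPeven : ∀ α β, P α β ≠ 0 → p α + p β = 0)
    (hKodd : ∀ α β, K α β ≠ 0 → p α + p β = 1)
    (hPΔ : P * Δ = 1) (hΔP : Δ * P = 1)
    (hcompat : ∀ β σ,
      sg (p β) * (∑ γ, P β γ * K γ σ)
        + ∑ γ, (sg (p β * p γ) * K γ β) * P γ σ = 0) :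
    ∀ α γ, sg (p α) * (∑ σ, K α σ * Δ σ γ) + ∑ σ, K γ σ * Δ α σ = 0 := by
  have hcompat' : signMatrix p * P * K + gradedTranspose p K * P = 0 := by
    ext β σ
    rw [Matrix.add_apply, Matrix.zero_apply, Matrix.mul_assoc, signMatrix_mul_apply]
    simpa only [Matrix.mul_apply, gradedTranspose, Matrix.of_apply] using hcompat β σ
  rw [(signMatrix_commute_of_even p hPeven).eq, Matrix.mul_assoc,
    gradedTranspose_eq_transpose_of_odd p hKodd] at hcompat'
  have hconsistent := mul_add_mul_eq_zero_of_inverse hPΔ hΔP hcompat'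
  intro α γ
  have hαγ := congrFun (congrFun hconsistent α) γ
  rw [Matrix.add_apply, Matrix.zero_apply, Matrix.mul_assoc, signMatrix_mul_apply] at hαγ
  simpa only [Matrix.mul_apply, Matrix.transpose_apply, mul_comm (Δ α _)] using hαγ

/-- For an invertible even graded-symmetric operator `P` with (two-sided)
inverse `Δ` (the finite-dimensional model of the retarded/advanced/causal propagator),
and an odd operator `K` satisfying the compatibility condition
`(-1)^{|β|} P_{βγ} K^γ_σ + (K†)_β^γ P_{γσ} = 0`, the propagator satisfies the
consistency condition `(-1)^{|α|} K^α_σ Δ^{σγ} + K^γ_σ Δ^{ασ} = 0`. -/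
theorem propagator_consistency
    {ι : Type*} [Fintype ι] [DecidableEq ι] (p : ι → ZMod 2) (P K Δ : Matrix ι ι ℂ)
    (hPeven : ∀ α β, P α β ≠ 0 → p α + p β = 0)
    (hPsym : ∀ α β, P α β = sg (p α * p β) * P β α)
    (hKodd : ∀ α β, K α β ≠ 0 → p α + p β = 1)
    (hPΔ : P * Δ = 1) (hΔP : Δ * P = 1)
    (hcompat : ∀ β σ,
      sg (p β) * (∑ γ, P β γ * K γ σ)
        + ∑ γ, (sg (p β * p γ) * K γ β) * P γ σ = 0) :
    ∀ α γ, sg (p α) * (∑ σ, K α σ * Δ σ γ) + ∑ σ, K γ σ * Δ α σ = 0 :=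
  propagator_consistency_general p P K Δ hPeven hKodd hPΔ hΔP hcompat
end

section
/- With R_V(F) := (e_T^{iV/ħ})^{⋆−1} ⋆ (e_T^{iV/ħ} ·_T F) on regular functionals, the intertwining relation {R_V(F), S₀}_⋆ = R_V(ŝ F) holds for all F, where ŝ(X) = e_T^{−iV/ħ} ·_T {e_T^{iV/ħ} ·_T X, S₀}_⋆, provided the quantum master equation {e_T^{iV/ħ}, S₀}_⋆ = 0 holds. -/
theorem sg_zero : sg 0 = 1 := if_pos rfl

section Leibniz

variable {A : Type*} [Ring A] {D : A → A} {u v : A}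

theorem map_one_eq_zero_of_leibniz (hvu : v * u = 1)
    (hD : ∀ y, D (u * y) = D u * y + u * D y) : D 1 = 0 := by
  have hu : u * D 1 = 0 := by
    have h := hD 1
    rwa [mul_one, mul_one, left_eq_add] at h
  calc D 1 = v * u * D 1 := by rw [hvu, one_mul]
    _ = 0 := by rw [mul_assoc, hu, mul_zero]

theorem map_eq_zero_of_leibniz_of_map_inverse_eq_zero (huv : u * v = 1) (hvu : v * u = 1)
    (hD : ∀ y, D (u * y) = D u * y + u * D y) (hv : D v = 0) : D u = 0 := by
  have h : D u * v = 0 := by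
    have h := hD v
    rw [huv, map_one_eq_zero_of_leibniz hvu hD, hv, mul_zero, add_zero] at h
    exact h.symm
  calc D u = D u * v * u := by rw [mul_assoc, hvu, mul_one]
    _ = 0 := by rw [h, zero_mul]

end Leibniz

theorem RV_intertwines_shat_general
    {A : Type*} [Ring A] [Algebra ℂ A]
    (𝒜 : ZMod 2 → Submodule ℂ A)
    (mT : A →ₗ[ℂ] A →ₗ[ℂ] A)
    (hmTassoc : ∀ x y z, mT (mT x y) z = mT x (mT y z))
    (hmTone : ∀ x, mT 1 x = x)
    (D : A →ₗ[ℂ] A)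
    (hDder : ∀ (i : ZMod 2) (x y : A), x ∈ 𝒜 i →
      D (x * y) = D x * y + sg i • (x * D y))
    (E Einvst EinvT : A)
    (hEinvst0 : Einvst ∈ 𝒜 0)
    (hstE : E * Einvst = 1) (hstE' : Einvst * E = 1)
    (hTE : mT E EinvT = 1)
    (hQME : D E = 0) :
    ∀ F : A,
      D (Einvst * mT E F)
        = Einvst * mT E (mT EinvT (D (mT E F))) := by
  have hleibniz : ∀ y, D (Einvst * y) = D Einvst * y + Einvst * D y := fun y => by
    simpa only [sg_zero, one_smul] using hDder 0 Einvst y hEinvst0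
  have hDEinvst : D Einvst = 0 :=
    map_eq_zero_of_leibniz_of_map_inverse_eq_zero hstE' hstE hleibniz hQME
  intro F
  rw [← hmTassoc, hTE, hmTone, hleibniz, hDEinvst, zero_mul, zero_add]

/-- With `R_V(F) := (e_T^{iV/ħ})^{⋆−1} ⋆ (e_T^{iV/ħ} ·_T F)`, the
intertwining relation `{R_V(F), S₀}_⋆ = R_V(ŝ F)` holds for all `F`, where
`ŝ(X) = e_T^{−iV/ħ} ·_T {e_T^{iV/ħ} ·_T X, S₀}_⋆`, provided the quantum master equation
`{e_T^{iV/ħ}, S₀}_⋆ = 0` holds.  The noncommutative star product is the ring product of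
`A`; the commutative time-ordered product `mT` is given as bilinear data. -/
theorem RV_intertwines_shat
    {A : Type*} [Ring A] [Algebra ℂ A]
    (𝒜 : ZMod 2 → Submodule ℂ A)
    (mT : A →ₗ[ℂ] A →ₗ[ℂ] A)
    (hmTcomm : ∀ x y, mT x y = mT y x)
    (hmTassoc : ∀ x y z, mT (mT x y) z = mT x (mT y z))
    (hmTone : ∀ x, mT 1 x = x)
    (D : A →ₗ[ℂ] A)
    (hDder : ∀ (i : ZMod 2) (x y : A), x ∈ 𝒜 i →
      D (x * y) = D x * y + sg i • (x * D y))
    (E Einvst EinvT : A)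
    (hE0 : E ∈ 𝒜 0) (hEinvst0 : Einvst ∈ 𝒜 0)
    (hstE : E * Einvst = 1) (hstE' : Einvst * E = 1)
    (hTE : mT E EinvT = 1)
    (hQME : D E = 0) :
    ∀ F : A,
      D (Einvst * mT E F)
        = Einvst * mT E (mT EinvT (D (mT E F))) :=
  RV_intertwines_shat_general 𝒜 mT hmTassoc hmTone D hDder E Einvst EinvT hEinvst0 hstE hstE' hTE
    hQME
end
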